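/- arXiv:2408.05582 — 2 statements merged into one kernel-verified Lean document; each statement's English description precedes it below -/
import Mathlib

section
/- Let X ∈ RB^{M×N} be fixed and define f(W,H) = (1/2)‖X - W·H‖_F^2 for W ∈ RB^{M×l} and H ∈ RB^{l×N}. Then f is differentiable in the four real component matrices of W and of H, and its RB gradients are ∇_W f(W,H) = (W·H - X)·H^H and ∇_H f(W,H) = W^H·(W·H - X); that is, the four real partial-derivative matrices of f with respect to the components W0,W1,W2,W3 equal, respectively, the real, i-, j-, and k-components of (W·H - X)·H^H, and analogously for H with W^H·(W·H - X). -/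
open Matrix

noncomputable section

/-- A reduced biquaternion `q = q0 + q1*i + q2*j + q3*k` with real components,
where `i^2 = k^2 = -1`, `j^2 = 1`, `ij = ji = k`, `jk = kj = i`, `ki = ik = -j`. -/
@[ext]
structure RB where
  r : ℝ
  i : ℝ
  j : ℝ
  k : ℝ

namespace RB

instance : Zero RB := ⟨⟨0, 0, 0, 0⟩⟩
instance : One RB := ⟨⟨1, 0, 0, 0⟩⟩
instance : Add RB := ⟨fun p q => ⟨p.r + q.r, p.i + q.i, p.j + q.j, p.k + q.k⟩⟩
instance : Neg RB := ⟨fun p => ⟨-p.r, -p.i, -p.j, -p.k⟩⟩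
instance : Mul RB := ⟨fun p q =>
  ⟨p.r * q.r - p.i * q.i + p.j * q.j - p.k * q.k,
   p.r * q.i + p.i * q.r + p.j * q.k + p.k * q.j,
   p.r * q.j + p.j * q.r - p.i * q.k - p.k * q.i,
   p.r * q.k + p.k * q.r + p.i * q.j + p.j * q.i⟩⟩
instance : SMul ℝ RB := ⟨fun a q => ⟨a * q.r, a * q.i, a * q.j, a * q.k⟩⟩

@[simp] theorem zero_r : (0 : RB).r = 0 := rfl
@[simp] theorem zero_i : (0 : RB).i = 0 := rfl
@[simp] theorem zero_j : (0 : RB).j = 0 := rfl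
@[simp] theorem zero_k : (0 : RB).k = 0 := rfl
@[simp] theorem one_r : (1 : RB).r = 1 := rfl
@[simp] theorem one_i : (1 : RB).i = 0 := rfl
@[simp] theorem one_j : (1 : RB).j = 0 := rfl
@[simp] theorem one_k : (1 : RB).k = 0 := rfl
@[simp] theorem add_r (p q : RB) : (p + q).r = p.r + q.r := rfl
@[simp] theorem add_i (p q : RB) : (p + q).i = p.i + q.i := rfl
@[simp] theorem add_j (p q : RB) : (p + q).j = p.j + q.j := rfl
@[simp] theorem add_k (p q : RB) : (p + q).k = p.k + q.k := rfl
@[simp] theorem neg_r (p : RB) : (-p).r = -p.r := rfl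
@[simp] theorem neg_i (p : RB) : (-p).i = -p.i := rfl
@[simp] theorem neg_j (p : RB) : (-p).j = -p.j := rfl
@[simp] theorem neg_k (p : RB) : (-p).k = -p.k := rfl
@[simp] theorem mul_r (p q : RB) :
    (p * q).r = p.r * q.r - p.i * q.i + p.j * q.j - p.k * q.k := rfl
@[simp] theorem mul_i (p q : RB) :
    (p * q).i = p.r * q.i + p.i * q.r + p.j * q.k + p.k * q.j := rfl
@[simp] theorem mul_j (p q : RB) :
    (p * q).j = p.r * q.j + p.j * q.r - p.i * q.k - p.k * q.i := rfl
@[simp] theorem mul_k (p q : RB) :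
    (p * q).k = p.r * q.k + p.k * q.r + p.i * q.j + p.j * q.i := rfl
@[simp] theorem smul_r (a : ℝ) (q : RB) : (a • q).r = a * q.r := rfl
@[simp] theorem smul_i (a : ℝ) (q : RB) : (a • q).i = a * q.i := rfl
@[simp] theorem smul_j (a : ℝ) (q : RB) : (a • q).j = a * q.j := rfl
@[simp] theorem smul_k (a : ℝ) (q : RB) : (a • q).k = a * q.k := rfl

instance : CommRing RB where
  add := (· + ·)
  zero := 0
  neg := Neg.neg
  mul := (· * ·)
  one := 1
  add_assoc p q s := by ext <;> simp <;> ring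
  zero_add p := by ext <;> simp
  add_zero p := by ext <;> simp
  add_comm p q := by ext <;> simp <;> ring
  neg_add_cancel p := by ext <;> simp
  mul_assoc p q s := by ext <;> simp <;> ring
  one_mul p := by ext <;> simp
  mul_one p := by ext <;> simp
  left_distrib p q s := by ext <;> simp <;> ring
  right_distrib p q s := by ext <;> simp <;> ring
  zero_mul p := by ext <;> simp
  mul_zero p := by ext <;> simp
  mul_comm p q := by ext <;> simp <;> ring
  nsmul := nsmulRec
  zsmul := zsmulRec

/-- The imaginary unit `i` of the reduced biquaternions. -/
def uI : RB := ⟨0, 1, 0, 0⟩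
/-- The imaginary unit `j` of the reduced biquaternions. -/
def uJ : RB := ⟨0, 0, 1, 0⟩
/-- The imaginary unit `k` of the reduced biquaternions. -/
def uK : RB := ⟨0, 0, 0, 1⟩

/-- Embedding of the reals into the reduced biquaternions. -/
def ofReal (a : ℝ) : RB := ⟨a, 0, 0, 0⟩

/-- Embedding of the complex numbers into the reduced biquaternions,
`x + y*î ↦ x + y*i`. -/
def ofComplex (z : ℂ) : RB := ⟨z.re, z.im, 0, 0⟩

/-- Conjugation of a reduced biquaternion: `q* = q0 - q1*i + q2*j - q3*k`. -/
def conj (q : RB) : RB := ⟨q.r, -q.i, q.j, -q.k⟩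

instance : Star RB := ⟨conj⟩

/-- The idempotent `e1 = (1 + j)/2`. -/
def e1 : RB := ⟨1/2, 0, 1/2, 0⟩

/-- The idempotent `e2 = (1 - j)/2`. -/
def e2 : RB := ⟨1/2, 0, -(1/2), 0⟩

end RB

/-- Real-part component matrix of an RB matrix. -/
def Mr {m n : Type*} (Q : Matrix m n RB) : Matrix m n ℝ := Matrix.of fun a b => (Q a b).r
/-- `i`-part component matrix of an RB matrix. -/
def Mi {m n : Type*} (Q : Matrix m n RB) : Matrix m n ℝ := Matrix.of fun a b => (Q a b).i
/-- `j`-part component matrix of an RB matrix. -/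
def Mj {m n : Type*} (Q : Matrix m n RB) : Matrix m n ℝ := Matrix.of fun a b => (Q a b).j
/-- `k`-part component matrix of an RB matrix. -/
def Mk {m n : Type*} (Q : Matrix m n RB) : Matrix m n ℝ := Matrix.of fun a b => (Q a b).k

/-- The RB matrix `Q0 + Q1*i + Q2*j + Q3*k` built from four real component matrices. -/
def mk4 {m n : Type*} (A0 A1 A2 A3 : m → n → ℝ) : Matrix m n RB :=
  Matrix.of fun a b => ⟨A0 a b, A1 a b, A2 a b, A3 a b⟩

/-- Inner product of two RB matrices: `⟨Q,P⟩ = Σ_{m,n} (q_{mn})* ⬝ p_{mn}`. -/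
def minner {m n : Type*} [Fintype m] [Fintype n] (Q P : Matrix m n RB) : RB :=
  ∑ a, ∑ b, RB.conj (Q a b) * P a b

/-- The Frobenius norm of an RB matrix, `‖Q‖_F = sqrt(Re⟨Q,Q⟩)`. -/
def fnorm {m n : Type*} [Fintype m] [Fintype n] (Q : Matrix m n RB) : ℝ :=
  Real.sqrt (minner Q Q).r

/-- Real Frobenius inner product of real matrices. -/
def finner {m n : Type*} [Fintype m] [Fintype n] (A B : Matrix m n ℝ) : ℝ :=
  ∑ a, ∑ b, A a b * B a b

/-- Real Frobenius norm of a real matrix. -/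
def rnorm {m n : Type*} [Fintype m] [Fintype n] (A : Matrix m n ℝ) : ℝ :=
  Real.sqrt (finner A A)

/-- `Q ∈ RB_+^{M×N}`: all four real component matrices are entrywise nonnegative. -/
def Pos {m n : Type*} (Q : Matrix m n RB) : Prop :=
  ∀ a b, 0 ≤ (Q a b).r ∧ 0 ≤ (Q a b).i ∧ 0 ≤ (Q a b).j ∧ 0 ≤ (Q a b).k

/-- `Q ∈ RB_{+j}^{M×N}`: `Q = Q0 + Q2*j` with `Q0, Q2` entrywise nonnegative. -/
def PosJ {m n : Type*} (Q : Matrix m n RB) : Prop :=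
  ∀ a b, 0 ≤ (Q a b).r ∧ (Q a b).i = 0 ∧ 0 ≤ (Q a b).j ∧ (Q a b).k = 0

/-- The projection `P_+` onto `RB_+^{M×N}`: entrywise positive part in all four components. -/
def proj {m n : Type*} (Q : Matrix m n RB) : Matrix m n RB :=
  Matrix.of fun a b => ⟨max (Q a b).r 0, max (Q a b).i 0, max (Q a b).j 0, max (Q a b).k 0⟩

/-- The projection `P_{+j}` onto `RB_{+j}^{M×N}`: `Q ↦ max(Q0,0) + max(Q2,0)*j`. -/
def projJ {m n : Type*} (Q : Matrix m n RB) : Matrix m n RB :=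
  Matrix.of fun a b => ⟨max (Q a b).r 0, 0, max (Q a b).j 0, 0⟩

/-- The objective `f(W,H) = (1/2)*‖X - W*H‖_F^2`. -/
def objf {M N l : ℕ} (X : Matrix (Fin M) (Fin N) RB) (W : Matrix (Fin M) (Fin l) RB)
    (H : Matrix (Fin l) (Fin N) RB) : ℝ :=
  (1 / 2) * fnorm (X - W * H) ^ 2

/-- The RB gradient `∇_W f(W,H) = (W*H - X)*H^H`. -/
def gradW {M N l : ℕ} (X : Matrix (Fin M) (Fin N) RB) (W : Matrix (Fin M) (Fin l) RB)
    (H : Matrix (Fin l) (Fin N) RB) : Matrix (Fin M) (Fin l) RB :=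
  (W * H - X) * Hᴴ

/-- The RB gradient `∇_H f(W,H) = W^H*(W*H - X)`. -/
def gradH {M N l : ℕ} (X : Matrix (Fin M) (Fin N) RB) (W : Matrix (Fin M) (Fin l) RB)
    (H : Matrix (Fin l) (Fin N) RB) : Matrix (Fin l) (Fin N) RB :=
  Wᴴ * (W * H - X)

/-- Entrywise embedding of a complex matrix into RB matrices. -/
def cmat {m n : Type*} (A : Matrix m n ℂ) : Matrix m n RB :=
  Matrix.of fun a b => RB.ofComplex (A a b)

/-- The `e1–e2` form `N1*e1 + N2*e2` of an RB matrix, for complex matrices `N1, N2`. -/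
def eform {m n : Type*} (N1 N2 : Matrix m n ℂ) : Matrix m n RB :=
  Matrix.of fun a b => RB.ofComplex (N1 a b) * RB.e1 + RB.ofComplex (N2 a b) * RB.e2

/-! Reading off the four real components of every entry identifies RB matrices with a Euclidean
space, in which `‖·‖_F` becomes the Euclidean norm and `Re⟨A, B⟩` the real inner product. Since
`V ↦ V * H` and `V ↦ W * V` are RB-linear, hence real-linear in the components, `f` has the form
`p ↦ ½‖c - A p‖²` with `A` linear, whose derivative is `v ↦ ⟪A p - c, A v⟫ = Re⟨W * H - X, V * H⟩`.
Writing `⟨A, B⟩ = tr (Aᴴ * B)`, cyclicity of the trace moves `H` to the other side: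
`⟨R, V * H⟩ = ⟨R * Hᴴ, V⟩`, and likewise `⟨R, W * V⟩ = ⟨Wᴴ * R, V⟩`. -/

namespace RB

instance : StarRing RB where
  star_involutive q := by ext <;> simp [star, conj]
  star_mul p q := by ext <;> simp [star, conj] <;> ring
  star_add p q := by ext <;> simp [star, conj] <;> ring

theorem sum_r {ι : Type*} (s : Finset ι) (f : ι → RB) : (∑ x ∈ s, f x).r = ∑ x ∈ s, (f x).r :=
  map_sum (AddMonoidHom.mk' RB.r fun _ _ => rfl) f s

end RB

section InnerProduct

variable {m n o : Type*} [Fintype m] [Fintype n] [Fintype o]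

theorem minner_eq_trace (A B : Matrix m n RB) : minner A B = trace (Aᴴ * B) := by
  simp only [minner, trace, diag, mul_apply, conjTranspose_apply]
  exact Finset.sum_comm

theorem minner_mul_right (A : Matrix m o RB) (P : Matrix m n RB) (H : Matrix n o RB) :
    minner A (P * H) = minner (A * Hᴴ) P := by
  rw [minner_eq_trace, minner_eq_trace, conjTranspose_mul, conjTranspose_conjTranspose,
    ← Matrix.mul_assoc, trace_mul_comm, Matrix.mul_assoc]

theorem minner_mul_left (A : Matrix m o RB) (W : Matrix m n RB) (P : Matrix n o RB) :
    minner A (W * P) = minner (Wᴴ * A) P := by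
  rw [minner_eq_trace, minner_eq_trace, conjTranspose_mul, conjTranspose_conjTranspose,
    Matrix.mul_assoc]

end InnerProduct

section Coordinates

variable {m n : Type*}

def RB.coords (q : RB) : Fin 4 → ℝ := ![q.r, q.i, q.j, q.k]

def realCoords : Matrix m n RB →+ EuclideanSpace ℝ (m × n × Fin 4) :=
  AddMonoidHom.mk' (fun Q => WithLp.toLp 2 fun x => RB.coords (Q x.1 x.2.1) x.2.2) fun P Q => by
    ext ⟨a, b, s⟩
    fin_cases s <;> simp [RB.coords]

theorem realCoords_ofReal_smul (c : ℝ) (Q : Matrix m n RB) :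
    realCoords (RB.ofReal c • Q) = c • realCoords Q := by
  ext ⟨a, b, s⟩
  fin_cases s <;> simp [realCoords, RB.coords, RB.ofReal]

theorem inner_realCoords [Fintype m] [Fintype n] (A B : Matrix m n RB) :
    inner ℝ (realCoords A) (realCoords B) = (minner A B).r := by
  simp only [PiLp.inner_apply, Fintype.sum_prod_type, minner, RB.sum_r, Fin.sum_univ_four]
  refine Finset.sum_congr rfl fun a _ => Finset.sum_congr rfl fun b _ => ?_
  simp [realCoords, RB.coords, RB.conj]
  ring

theorem fnorm_eq_norm_realCoords [Fintype m] [Fintype n] (Q : Matrix m n RB) :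
    fnorm Q = ‖realCoords Q‖ := by
  rw [fnorm, ← inner_realCoords, real_inner_self_eq_norm_sq, Real.sqrt_sq (norm_nonneg _)]

end Coordinates

section Components

variable {m n m' n' : Type*}

abbrev RBComponents (m n : Type*) :=
  (m → n → ℝ) × (m → n → ℝ) × (m → n → ℝ) × (m → n → ℝ)

def ofComponents (p : RBComponents m n) : Matrix m n RB := mk4 p.1 p.2.1 p.2.2.1 p.2.2.2

def toComponents (Q : Matrix m n RB) : RBComponents m n := (Mr Q, Mi Q, Mj Q, Mk Q)

theorem ofComponents_toComponents (Q : Matrix m n RB) : ofComponents (toComponents Q) = Q :=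
  rfl

theorem ofComponents_add (p q : RBComponents m n) :
    ofComponents (p + q) = ofComponents p + ofComponents q :=
  rfl

theorem ofComponents_smul (c : ℝ) (p : RBComponents m n) :
    ofComponents (c • p) = RB.ofReal c • ofComponents p := by
  ext a b <;> simp [ofComponents, mk4, RB.ofReal]

theorem re_minner_ofComponents [Fintype m] [Fintype n] (G : Matrix m n RB)
    (V : RBComponents m n) :
    (minner G (ofComponents V)).r =
      finner (Mr G) V.1 + finner (Mi G) V.2.1 + finner (Mj G) V.2.2.1 + finner (Mk G) V.2.2.2 := by
  simp only [minner, finner, RB.sum_r, ← Finset.sum_add_distrib]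
  refine Finset.sum_congr rfl fun a _ => Finset.sum_congr rfl fun b _ => ?_
  simp [ofComponents, mk4, Mr, Mi, Mj, Mk, RB.conj]

variable [Fintype m] [Fintype n] [Fintype m'] [Fintype n']

def componentsCLM (T : Matrix m n RB →ₗ[RB] Matrix m' n' RB) :
    RBComponents m n →L[ℝ] EuclideanSpace ℝ (m' × n' × Fin 4) :=
  LinearMap.toContinuousLinearMap
    { toFun := fun p => realCoords (T (ofComponents p))
      map_add' := fun p q => by simp only [ofComponents_add, map_add]
      map_smul' := fun c p => by
        simp only [ofComponents_smul, map_smul, realCoords_ofReal_smul, RingHom.id_apply] }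

theorem componentsCLM_apply (T : Matrix m n RB →ₗ[RB] Matrix m' n' RB) (p : RBComponents m n) :
    componentsCLM T p = realCoords (T (ofComponents p)) :=
  rfl

end Components

theorem hasFDerivAt_half_norm_sub_sq {E F : Type*} [NormedAddCommGroup E] [NormedSpace ℝ E]
    [NormedAddCommGroup F] [InnerProductSpace ℝ F] (A : E →L[ℝ] F) (y : F) (x : E) :
    HasFDerivAt (fun x => (1 / 2 : ℝ) * ‖y - A x‖ ^ 2) ((innerSL ℝ (A x - y)).comp A) x := by
  have h := (((hasFDerivAt_const y x).sub A.hasFDerivAt).norm_sq).const_mul (1 / 2 : ℝ)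
  refine h.congr_fderiv ?_
  ext v
  simp

section Gradient

variable {m n m' n' : Type*} [Fintype m] [Fintype n] [Fintype m'] [Fintype n']

theorem hasFDerivAt_half_fnorm_sub_sq (X : Matrix m' n' RB)
    (T : Matrix m n RB →ₗ[RB] Matrix m' n' RB) (Q : Matrix m n RB) :
    HasFDerivAt (fun p => (1 / 2 : ℝ) * fnorm (X - T (ofComponents p)) ^ 2)
      ((innerSL ℝ (realCoords (T Q - X))).comp (componentsCLM T)) (toComponents Q) := by
  have h := hasFDerivAt_half_norm_sub_sq (componentsCLM T) (realCoords X) (toComponents Q)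
  rw [componentsCLM_apply, ofComponents_toComponents, ← map_sub] at h
  refine h.congr_of_eventuallyEq (Filter.Eventually.of_forall fun p => ?_)
  simp only [fnorm_eq_norm_realCoords, map_sub, componentsCLM_apply]

theorem gradient_half_fnorm_sub_sq_of_adjoint (X : Matrix m' n' RB)
    (T : Matrix m n RB →ₗ[RB] Matrix m' n' RB)
    (T' : Matrix m' n' RB → Matrix m n RB) (hT : ∀ A P, minner A (T P) = minner (T' A) P)
    (Q : Matrix m n RB) :
    DifferentiableAt ℝ (fun p => (1 / 2 : ℝ) * fnorm (X - T (ofComponents p)) ^ 2)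
        (toComponents Q) ∧
      ∀ V0 V1 V2 V3 : Matrix m n ℝ,
        fderiv ℝ (fun p => (1 / 2 : ℝ) * fnorm (X - T (ofComponents p)) ^ 2) (toComponents Q)
            (V0, V1, V2, V3) =
          finner (Mr (T' (T Q - X))) V0 + finner (Mi (T' (T Q - X))) V1 +
            finner (Mj (T' (T Q - X))) V2 + finner (Mk (T' (T Q - X))) V3 := by
  have hf := hasFDerivAt_half_fnorm_sub_sq X T Q
  refine ⟨hf.differentiableAt, fun V0 V1 V2 V3 => ?_⟩
  rw [hf.fderiv, ContinuousLinearMap.comp_apply, innerSL_apply_apply, componentsCLM_apply]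
  rw [inner_realCoords, hT, re_minner_ofComponents]

end Gradient

/-- `f(W,H) = (1/2)‖X - W*H‖_F²` is differentiable in the four real component
matrices of `W` (resp. of `H`), and the four real partial-derivative matrices equal the
real, i-, j-, k-components of `(W*H - X)*H^H` (resp. of `W^H*(W*H - X)`). -/
theorem rb_gradient {M N l : ℕ} (X : Matrix (Fin M) (Fin N) RB)
    (W : Matrix (Fin M) (Fin l) RB) (H : Matrix (Fin l) (Fin N) RB) :
    (DifferentiableAt ℝ
        (fun p : (Fin M → Fin l → ℝ) × (Fin M → Fin l → ℝ) × (Fin M → Fin l → ℝ) ×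
            (Fin M → Fin l → ℝ) => objf X (mk4 p.1 p.2.1 p.2.2.1 p.2.2.2) H)
        (Mr W, Mi W, Mj W, Mk W) ∧
      ∀ V0 V1 V2 V3 : Matrix (Fin M) (Fin l) ℝ,
        fderiv ℝ
          (fun p : (Fin M → Fin l → ℝ) × (Fin M → Fin l → ℝ) × (Fin M → Fin l → ℝ) ×
              (Fin M → Fin l → ℝ) => objf X (mk4 p.1 p.2.1 p.2.2.1 p.2.2.2) H)
          (Mr W, Mi W, Mj W, Mk W) (V0, V1, V2, V3) =
        finner (Mr (gradW X W H)) V0 + finner (Mi (gradW X W H)) V1 +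
          finner (Mj (gradW X W H)) V2 + finner (Mk (gradW X W H)) V3) ∧
    (DifferentiableAt ℝ
        (fun p : (Fin l → Fin N → ℝ) × (Fin l → Fin N → ℝ) × (Fin l → Fin N → ℝ) ×
            (Fin l → Fin N → ℝ) => objf X W (mk4 p.1 p.2.1 p.2.2.1 p.2.2.2))
        (Mr H, Mi H, Mj H, Mk H) ∧
      ∀ V0 V1 V2 V3 : Matrix (Fin l) (Fin N) ℝ,
        fderiv ℝ
          (fun p : (Fin l → Fin N → ℝ) × (Fin l → Fin N → ℝ) × (Fin l → Fin N → ℝ) ×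
              (Fin l → Fin N → ℝ) => objf X W (mk4 p.1 p.2.1 p.2.2.1 p.2.2.2))
          (Mr H, Mi H, Mj H, Mk H) (V0, V1, V2, V3) =
        finner (Mr (gradH X W H)) V0 + finner (Mi (gradH X W H)) V1 +
          finner (Mj (gradH X W H)) V2 + finner (Mk (gradH X W H)) V3) :=
  ⟨gradient_half_fnorm_sub_sq_of_adjoint X (mulRightLinearMap _ RB H) (· * Hᴴ)
      (fun _ _ => minner_mul_right ..) W,
    gradient_half_fnorm_sub_sq_of_adjoint X (mulLeftLinearMap _ RB W) (Wᴴ * ·)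
      (fun _ _ => minner_mul_left ..) H⟩
end
end

section
/- Let X ∈ RB^{M×N}, f(W,H) = (1/2)‖X - W·H‖_F^2, and let W* ∈ RB_+^{M×l}, H* ∈ RB_{+j}^{l×N}. Then the following two conditions are equivalent. (KKT): all four real component matrices of ∇_W f(W*,H*) are entrywise nonnegative; the real and j-imaginary component matrices of ∇_H f(W*,H*) are entrywise nonnegative; each of the four real component matrices of W* has zero entrywise (Hadamard) product with the corresponding component matrix of ∇_W f(W*,H*); and the real and j-imaginary component matrices of H* have zero entrywise product with the corresponding components of ∇_H f(W*,H*). (VI): Re⟨∇_W f(W*,H*), M - W*⟩ ≥ 0 for all M ∈ RB_+^{M×l}, and Re⟨∇_H f(W*,H*), N - H*⟩ ≥ 0 for all N ∈ RB_{+j}^{l×N}. -/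
open Matrix

noncomputable section

/-- `RB.r` as an additive monoid hom. -/
def RB.rHom : RB →+ ℝ := { toFun := RB.r, map_zero' := rfl, map_add' := fun _ _ => rfl }

theorem r_sum {α : Type*} (s : Finset α) (f : α → RB) :
    (∑ x ∈ s, f x).r = ∑ x ∈ s, (f x).r := map_sum RB.rHom f s

@[simp] theorem RB.sub_r (p q : RB) : (p - q).r = p.r - q.r := rfl
@[simp] theorem RB.sub_i (p q : RB) : (p - q).i = p.i - q.i := rfl
@[simp] theorem RB.sub_j (p q : RB) : (p - q).j = p.j - q.j := rfl
@[simp] theorem RB.sub_k (p q : RB) : (p - q).k = p.k - q.k := rfl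

theorem minner_r {m n : Type*} [Fintype m] [Fintype n] (Q P : Matrix m n RB) :
    (minner Q P).r = ∑ a, ∑ b, ((Q a b).r * (P a b).r + (Q a b).i * (P a b).i
      + (Q a b).j * (P a b).j + (Q a b).k * (P a b).k) := by
  unfold minner
  rw [r_sum]
  refine Finset.sum_congr rfl fun a _ => ?_
  rw [r_sum]
  refine Finset.sum_congr rfl fun b _ => ?_
  simp [RB.conj]

theorem four_split {a b c d : ℝ} (ha : 0 ≤ a) (hb : 0 ≤ b) (hc : 0 ≤ c) (hd : 0 ≤ d)
    (h : a + b + c + d = 0) : a = 0 ∧ b = 0 ∧ c = 0 ∧ d = 0 :=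
  ⟨by linarith, by linarith, by linarith, by linarith⟩

theorem minner_single_r {m n : Type*} [Fintype m] [Fintype n] [DecidableEq m] [DecidableEq n]
    (G : Matrix m n RB) (a0 : m) (b0 : n) (v : RB) :
    (minner G (Matrix.of fun a b => if a = a0 then (if b = b0 then v else 0) else 0)).r
      = (G a0 b0).r * v.r + (G a0 b0).i * v.i + (G a0 b0).j * v.j + (G a0 b0).k * v.k := by
  rw [minner_r]
  rw [Finset.sum_eq_single a0]
  · rw [Finset.sum_eq_single b0]
    · simp
    · intro b _ hb; simp [hb]
    · intro h; exact absurd (Finset.mem_univ b0) h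
  · intro a _ ha; simp [ha]
  · intro h; exact absurd (Finset.mem_univ a0) h

/-- equivalence of the KKT conditions and the variational inequalities at a
feasible pair `(W*, H*)` for `f(W,H) = (1/2)‖X - W*H‖_F²`. -/
theorem rb_kkt_iff_vi {M N l : ℕ} (X : Matrix (Fin M) (Fin N) RB)
    (Ws : Matrix (Fin M) (Fin l) RB) (Hs : Matrix (Fin l) (Fin N) RB)
    (hW : Pos Ws) (hH : PosJ Hs) :
    ((Pos (gradW X Ws Hs) ∧
      (∀ a b, 0 ≤ (gradH X Ws Hs a b).r ∧ 0 ≤ (gradH X Ws Hs a b).j) ∧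
      (∀ a b, (Ws a b).r * (gradW X Ws Hs a b).r = 0 ∧
              (Ws a b).i * (gradW X Ws Hs a b).i = 0 ∧
              (Ws a b).j * (gradW X Ws Hs a b).j = 0 ∧
              (Ws a b).k * (gradW X Ws Hs a b).k = 0) ∧
      (∀ a b, (Hs a b).r * (gradH X Ws Hs a b).r = 0 ∧
              (Hs a b).j * (gradH X Ws Hs a b).j = 0))
     ↔
     ((∀ Mm : Matrix (Fin M) (Fin l) RB, Pos Mm →
        0 ≤ (minner (gradW X Ws Hs) (Mm - Ws)).r) ∧
      (∀ Nn : Matrix (Fin l) (Fin N) RB, PosJ Nn →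
        0 ≤ (minner (gradH X Ws Hs) (Nn - Hs)).r))) := by
  classical
  set G := gradW X Ws Hs with hG
  set K := gradH X Ws Hs with hK
  constructor
  · rintro ⟨h1, h2, h3, h4⟩
    constructor
    · intro Mm hMm
      rw [minner_r]
      refine Finset.sum_nonneg fun a _ => Finset.sum_nonneg fun b _ => ?_
      obtain ⟨g1, g2, g3, g4⟩ := h1 a b
      obtain ⟨m1, m2, m3, m4⟩ := hMm a b
      obtain ⟨c1, c2, c3, c4⟩ := h3 a b
      simp only [Matrix.sub_apply, RB.sub_r, RB.sub_i, RB.sub_j, RB.sub_k]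
      nlinarith [mul_nonneg g1 m1, mul_nonneg g2 m2, mul_nonneg g3 m3, mul_nonneg g4 m4]
    · intro Nn hNn
      rw [minner_r]
      refine Finset.sum_nonneg fun a _ => Finset.sum_nonneg fun b _ => ?_
      obtain ⟨g1, g3⟩ := h2 a b
      obtain ⟨n1, n2, n3, n4⟩ := hNn a b
      obtain ⟨p1, p2, p3, p4⟩ := hH a b
      obtain ⟨c1, c3⟩ := h4 a b
      simp only [Matrix.sub_apply, RB.sub_r, RB.sub_i, RB.sub_j, RB.sub_k]
      rw [n2, n4, p2, p4]
      nlinarith [mul_nonneg g1 n1, mul_nonneg g3 n3]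
  · rintro ⟨hVW, hVH⟩
    -- single-entry test matrices for the W inequality
    have testW : ∀ (a0 : Fin M) (b0 : Fin l) (v : RB),
        0 ≤ v.r → 0 ≤ v.i → 0 ≤ v.j → 0 ≤ v.k →
        0 ≤ (G a0 b0).r * v.r + (G a0 b0).i * v.i + (G a0 b0).j * v.j + (G a0 b0).k * v.k := by
      intro a0 b0 v hr hi hj hk
      set E : Matrix (Fin M) (Fin l) RB :=
        Matrix.of fun a b => if a = a0 then (if b = b0 then v else 0) else 0 with hE
      have hPos : Pos (Ws + E) := by
        intro a b
        obtain ⟨w1, w2, w3, w4⟩ := hW a b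
        simp only [Matrix.add_apply, hE, Matrix.of_apply, RB.add_r, RB.add_i, RB.add_j, RB.add_k]
        refine ⟨?_, ?_, ?_, ?_⟩ <;> split_ifs <;> (try simp) <;> linarith
      have h := hVW (Ws + E) hPos
      rw [add_sub_cancel_left, minner_single_r] at h
      exact h
    have testH : ∀ (a0 : Fin l) (b0 : Fin N) (v : RB),
        0 ≤ v.r → v.i = 0 → 0 ≤ v.j → v.k = 0 →
        0 ≤ (K a0 b0).r * v.r + (K a0 b0).i * v.i + (K a0 b0).j * v.j + (K a0 b0).k * v.k := by
      intro a0 b0 v hr hi hj hk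
      set E : Matrix (Fin l) (Fin N) RB :=
        Matrix.of fun a b => if a = a0 then (if b = b0 then v else 0) else 0 with hE
      have hPos : PosJ (Hs + E) := by
        intro a b
        obtain ⟨w1, w2, w3, w4⟩ := hH a b
        simp only [Matrix.add_apply, hE, Matrix.of_apply, RB.add_r, RB.add_i, RB.add_j, RB.add_k]
        refine ⟨?_, ?_, ?_, ?_⟩ <;> split_ifs <;> (try simp [w2, w4, hi, hk]) <;> linarith
      have h := hVH (Hs + E) hPos
      rw [add_sub_cancel_left, minner_single_r] at h
      exact h
    have hGpos : Pos G := by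
      intro a b
      refine ⟨?_, ?_, ?_, ?_⟩
      · have := testW a b ⟨1, 0, 0, 0⟩ (by norm_num) le_rfl le_rfl le_rfl; simpa using this
      · have := testW a b ⟨0, 1, 0, 0⟩ le_rfl (by norm_num) le_rfl le_rfl; simpa using this
      · have := testW a b ⟨0, 0, 1, 0⟩ le_rfl le_rfl (by norm_num) le_rfl; simpa using this
      · have := testW a b ⟨0, 0, 0, 1⟩ le_rfl le_rfl le_rfl (by norm_num); simpa using this
    have hKpos : ∀ a b, 0 ≤ (K a b).r ∧ 0 ≤ (K a b).j := by
      intro a b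
      constructor
      · have := testH a b ⟨1, 0, 0, 0⟩ (by norm_num) rfl le_rfl rfl; simpa using this
      · have := testH a b ⟨0, 0, 1, 0⟩ le_rfl rfl (by norm_num) rfl; simpa using this
    -- complementarity for W
    have hcW : ∀ a b, (Ws a b).r * (G a b).r = 0 ∧ (Ws a b).i * (G a b).i = 0 ∧
        (Ws a b).j * (G a b).j = 0 ∧ (Ws a b).k * (G a b).k = 0 := by
      have hPos0 : Pos (0 : Matrix (Fin M) (Fin l) RB) := by
        intro a b; simp [Matrix.zero_apply]
      have h := hVW 0 hPos0
      rw [zero_sub, minner_r] at h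
      have key : ∀ a b, 0 ≤ (G a b).r * (Ws a b).r + (G a b).i * (Ws a b).i
          + (G a b).j * (Ws a b).j + (G a b).k * (Ws a b).k := by
        intro a b
        obtain ⟨g1, g2, g3, g4⟩ := hGpos a b
        obtain ⟨w1, w2, w3, w4⟩ := hW a b
        nlinarith [mul_nonneg g1 w1, mul_nonneg g2 w2, mul_nonneg g3 w3, mul_nonneg g4 w4]
      have hsum : (∑ a, ∑ b, ((G a b).r * (Ws a b).r + (G a b).i * (Ws a b).i
          + (G a b).j * (Ws a b).j + (G a b).k * (Ws a b).k)) ≤ 0 := by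
        have e : (∑ a, ∑ b, ((G a b).r * ((-Ws) a b).r + (G a b).i * ((-Ws) a b).i
            + (G a b).j * ((-Ws) a b).j + (G a b).k * ((-Ws) a b).k))
            = -(∑ a, ∑ b, ((G a b).r * (Ws a b).r + (G a b).i * (Ws a b).i
            + (G a b).j * (Ws a b).j + (G a b).k * (Ws a b).k)) := by
          rw [← Finset.sum_neg_distrib]
          refine Finset.sum_congr rfl fun a _ => ?_
          rw [← Finset.sum_neg_distrib]
          refine Finset.sum_congr rfl fun b _ => ?_
          simp only [Matrix.neg_apply, RB.neg_r, RB.neg_i, RB.neg_j, RB.neg_k]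
          ring
        rw [e] at h
        linarith
      have hzero : ∀ a ∈ (Finset.univ : Finset (Fin M)), (∑ b, ((G a b).r * (Ws a b).r
          + (G a b).i * (Ws a b).i + (G a b).j * (Ws a b).j + (G a b).k * (Ws a b).k)) = 0 := by
        rw [← Finset.sum_eq_zero_iff_of_nonneg
          (fun a _ => Finset.sum_nonneg fun b _ => key a b)]
        exact le_antisymm hsum (Finset.sum_nonneg fun a _ =>
          Finset.sum_nonneg fun b _ => key a b)
      intro a b
      have hz : (G a b).r * (Ws a b).r + (G a b).i * (Ws a b).i
          + (G a b).j * (Ws a b).j + (G a b).k * (Ws a b).k = 0 := by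
        have := hzero a (Finset.mem_univ a)
        rw [Finset.sum_eq_zero_iff_of_nonneg (fun b _ => key a b)] at this
        exact this b (Finset.mem_univ b)
      obtain ⟨g1, g2, g3, g4⟩ := hGpos a b
      obtain ⟨w1, w2, w3, w4⟩ := hW a b
      obtain ⟨e1, e2, e3, e4⟩ := four_split (mul_nonneg g1 w1) (mul_nonneg g2 w2)
        (mul_nonneg g3 w3) (mul_nonneg g4 w4) hz
      exact ⟨by rw [mul_comm]; exact e1, by rw [mul_comm]; exact e2,
        by rw [mul_comm]; exact e3, by rw [mul_comm]; exact e4⟩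
    -- complementarity for H
    have hcH : ∀ a b, (Hs a b).r * (K a b).r = 0 ∧ (Hs a b).j * (K a b).j = 0 := by
      have hPos0 : PosJ (0 : Matrix (Fin l) (Fin N) RB) := by
        intro a b; simp [Matrix.zero_apply]
      have h := hVH 0 hPos0
      rw [zero_sub, minner_r] at h
      have key : ∀ a b, 0 ≤ (K a b).r * (Hs a b).r + (K a b).i * (Hs a b).i
          + (K a b).j * (Hs a b).j + (K a b).k * (Hs a b).k := by
        intro a b
        obtain ⟨g1, g3⟩ := hKpos a b
        obtain ⟨w1, w2, w3, w4⟩ := hH a b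
        rw [w2, w4]
        nlinarith [mul_nonneg g1 w1, mul_nonneg g3 w3]
      have hsum : (∑ a, ∑ b, ((K a b).r * (Hs a b).r + (K a b).i * (Hs a b).i
          + (K a b).j * (Hs a b).j + (K a b).k * (Hs a b).k)) ≤ 0 := by
        have e : (∑ a, ∑ b, ((K a b).r * ((-Hs) a b).r + (K a b).i * ((-Hs) a b).i
            + (K a b).j * ((-Hs) a b).j + (K a b).k * ((-Hs) a b).k))
            = -(∑ a, ∑ b, ((K a b).r * (Hs a b).r + (K a b).i * (Hs a b).i
            + (K a b).j * (Hs a b).j + (K a b).k * (Hs a b).k)) := by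
          rw [← Finset.sum_neg_distrib]
          refine Finset.sum_congr rfl fun a _ => ?_
          rw [← Finset.sum_neg_distrib]
          refine Finset.sum_congr rfl fun b _ => ?_
          simp only [Matrix.neg_apply, RB.neg_r, RB.neg_i, RB.neg_j, RB.neg_k]
          ring
        rw [e] at h
        linarith
      have hzero : ∀ a ∈ (Finset.univ : Finset (Fin l)), (∑ b, ((K a b).r * (Hs a b).r
          + (K a b).i * (Hs a b).i + (K a b).j * (Hs a b).j + (K a b).k * (Hs a b).k)) = 0 := by
        rw [← Finset.sum_eq_zero_iff_of_nonneg
          (fun a _ => Finset.sum_nonneg fun b _ => key a b)]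
        exact le_antisymm hsum (Finset.sum_nonneg fun a _ =>
          Finset.sum_nonneg fun b _ => key a b)
      intro a b
      have hz : (K a b).r * (Hs a b).r + (K a b).i * (Hs a b).i
          + (K a b).j * (Hs a b).j + (K a b).k * (Hs a b).k = 0 := by
        have := hzero a (Finset.mem_univ a)
        rw [Finset.sum_eq_zero_iff_of_nonneg (fun b _ => key a b)] at this
        exact this b (Finset.mem_univ b)
      obtain ⟨g1, g3⟩ := hKpos a b
      obtain ⟨w1, w2, w3, w4⟩ := hH a b
      rw [w2, w4, mul_zero, mul_zero, add_zero] at hz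
      have hz' : (K a b).r * (Hs a b).r + (K a b).j * (Hs a b).j + 0 + 0 = 0 := by
        linarith
      obtain ⟨e1, e3, -, -⟩ := four_split (mul_nonneg g1 w1) (mul_nonneg g3 w3)
        le_rfl le_rfl hz'
      exact ⟨by rw [mul_comm]; exact e1, by rw [mul_comm]; exact e3⟩
    exact ⟨hGpos, hKpos, hcW, hcH⟩
end
end
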